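/- Let d ≥ 1, R > 0, M ≥ 0, λ₀ ∈ ℂ^d, and let φ : D_d(λ₀, R) → ℂ be a holomorphic function on the polydisk of radius R, bounded in modulus by M. Then there exists a holomorphic function φ̃ : D_{2d}(ι_d(λ₀), R/4) → ℂ on the 2d-dimensional polydisk of radius R/4, bounded in modulus by 4^d·M, such that the restriction of φ̃ ∘ ι_d to D_d(λ₀, R/4) equals Re(φ), where ι_d : ℂ^d → ℂ^{2d} is the embedding (x₁+iy₁, ..., x_d+iy_d) ↦ (x₁, y₁, ..., x_d, y_d). -/

import Mathlib

open Complex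

/-- If `f` is ℂ-differentiable at `star x`, then `conj ∘ f ∘ star` is ℂ-differentiable at `x`. -/
lemma conj_comp_star_differentiableAt {d : ℕ} {f : (Fin d → ℂ) → ℂ} {x : Fin d → ℂ}
    (hf : DifferentiableAt ℂ f (star x)) :
    DifferentiableAt ℂ (fun z => (starRingEnd ℂ) (f (star z))) x := by
  obtain ⟨f', hf'⟩ := hf
  set L : (Fin d → ℂ) →L[ℂ] ℂ :=
    { toFun := fun v => (starRingEnd ℂ) (f' (star v))
      map_add' := by intro a b; simp [star_add, map_add]
      map_smul' := by
        intro c v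
        simp only [star_smul, star_trivial, map_smul, smul_eq_mul, map_mul,
          RingHom.id_apply, Complex.conj_conj, Complex.star_def]
      cont := by exact continuous_star.comp (f'.continuous.comp continuous_star) } with hL
  have hS : HasFDerivAt (fun z : Fin d → ℂ => star z)
      ((starL' ℝ : (Fin d → ℂ) ≃L[ℝ] (Fin d → ℂ)) : (Fin d → ℂ) →L[ℝ] (Fin d → ℂ)) x :=
    ((starL' ℝ : (Fin d → ℂ) ≃L[ℝ] (Fin d → ℂ)) :
      (Fin d → ℂ) →L[ℝ] (Fin d → ℂ)).hasFDerivAt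
  have hC : HasFDerivAt (starRingEnd ℂ)
      ((Complex.conjCLE : ℂ ≃L[ℝ] ℂ) : ℂ →L[ℝ] ℂ) (f (star x)) :=
    ((Complex.conjCLE : ℂ ≃L[ℝ] ℂ) : ℂ →L[ℝ] ℂ).hasFDerivAt
  have hcomp := hC.comp x ((hf'.restrictScalars ℝ).comp x hS)
  have : HasFDerivAt (fun z => (starRingEnd ℂ) (f (star z))) L x := by
    apply hasFDerivAt_of_restrictScalars ℝ hcomp
    ext v
    simp [hL]
  exact this.differentiableAt

/-- Componentwise bound on a complex number assembled from real/imaginary approximations. -/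
lemma abs_lt_of_parts {a b c : ℂ} {r : ℝ} (h0 : ‖a - (c.re : ℂ)‖ < r)
    (h1 : ‖b - (c.im : ℂ)‖ < r) :
    ‖a + Complex.I * b - c‖ < 2 * r := by
  have hc : c = ((c.re : ℂ)) + Complex.I * (c.im : ℂ) := by
    rw [mul_comm]; exact (Complex.re_add_im c).symm
  have he : a + Complex.I * b - c = (a - (c.re : ℂ)) + Complex.I * (b - (c.im : ℂ)) := by
    conv_lhs => rw [hc]
    ring
  rw [he]
  calc ‖_‖ ≤ ‖a - (c.re : ℂ)‖
        + ‖Complex.I * (b - (c.im : ℂ))‖ := norm_add_le _ _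
    _ = ‖a - (c.re : ℂ)‖ + ‖b - (c.im : ℂ)‖ := by
        rw [norm_mul, Complex.norm_I, one_mul]
    _ < r + r := add_lt_add h0 h1
    _ = 2 * r := by ring

/-- The embedding `ι_d : ℂ^d → ℂ^{2d}`, `(x₁+iy₁,…,x_d+iy_d) ↦ (x₁,y₁,…,x_d,y_d)`. -/
noncomputable def iotaEmb (d : ℕ) (z : Fin d → ℂ) : Fin (2 * d) → ℂ := fun j =>
  if j.val % 2 = 0 then ((z ⟨j.val / 2, by have := j.isLt; omega⟩).re : ℂ)
  else ((z ⟨j.val / 2, by have := j.isLt; omega⟩).im : ℂ)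

lemma iotaEmb_apply_even (d : ℕ) (z : Fin d → ℂ) (k : Fin d) (h : 2 * k.1 < 2 * d) :
    iotaEmb d z ⟨2 * k.1, h⟩ = ((z k).re : ℂ) := by
  have h2 : (⟨2 * k.1 / 2, by have := k.isLt; omega⟩ : Fin d) = k :=
    Fin.ext (show 2 * k.1 / 2 = k.1 by omega)
  simp only [iotaEmb, Nat.mul_mod_right, if_true]
  rw [h2]

lemma iotaEmb_apply_odd (d : ℕ) (z : Fin d → ℂ) (k : Fin d) (h : 2 * k.1 + 1 < 2 * d) :
    iotaEmb d z ⟨2 * k.1 + 1, h⟩ = ((z k).im : ℂ) := by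
  have h1 : (2 * k.1 + 1) % 2 = 1 := by omega
  have h2 : (⟨(2 * k.1 + 1) / 2, by have := k.isLt; omega⟩ : Fin d) = k :=
    Fin.ext (show (2 * k.1 + 1) / 2 = k.1 by omega)
  simp only [iotaEmb, h1, if_neg (by omega : ¬ (1 = 0))]
  rw [h2]

/-- Complexification lemma (Sumi–Urbański): the real part of a bounded holomorphic function
on the polydisk `D_d(λ₀,R)` extends to a holomorphic function on the `2d`-dimensional
polydisk `D_{2d}(ι_d(λ₀), R/4)`, bounded by `4^d·M`. Here polydisks are balls for the sup
metric on `Fin d → ℂ`. -/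
theorem real_part_complexification
    (d : ℕ) (hd : 1 ≤ d) (R M : ℝ) (hR : 0 < R) (hM : 0 ≤ M)
    (lam₀ : Fin d → ℂ) (φ : (Fin d → ℂ) → ℂ)
    (hφ : DifferentiableOn ℂ φ (Metric.ball lam₀ R))
    (hbd : ∀ z ∈ Metric.ball lam₀ R, ‖φ z‖ ≤ M) :
    ∃ ψ : (Fin (2 * d) → ℂ) → ℂ,
      DifferentiableOn ℂ ψ (Metric.ball (iotaEmb d lam₀) (R / 4)) ∧
      (∀ w ∈ Metric.ball (iotaEmb d lam₀) (R / 4), ‖ψ w‖ ≤ 4 ^ d * M) ∧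
      ∀ z ∈ Metric.ball lam₀ (R / 4), ψ (iotaEmb d z) = ((φ z).re : ℂ) := by
  classical
  set α : (Fin (2 * d) → ℂ) → (Fin d → ℂ) :=
    fun w k => w ⟨2 * k.1, by have := k.isLt; omega⟩
      + Complex.I * w ⟨2 * k.1 + 1, by have := k.isLt; omega⟩ with hα
  set β : (Fin (2 * d) → ℂ) → (Fin d → ℂ) :=
    fun w k => w ⟨2 * k.1, by have := k.isLt; omega⟩
      - Complex.I * w ⟨2 * k.1 + 1, by have := k.isLt; omega⟩ with hβ
  -- membership facts
  have key : ∀ w ∈ Metric.ball (iotaEmb d lam₀) (R / 4),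
      α w ∈ Metric.ball lam₀ R ∧ star (β w) ∈ Metric.ball lam₀ R := by
    intro w hw
    have hw' : ∀ j : Fin (2 * d), ‖w j - iotaEmb d lam₀ j‖ < R / 4 := by
      intro j
      have h1 := dist_le_pi_dist w (iotaEmb d lam₀) j
      rw [Complex.dist_eq] at h1
      exact lt_of_le_of_lt h1 (Metric.mem_ball.1 hw)
    have hcoord : ∀ k : Fin d,
        ‖α w k - lam₀ k‖ < R ∧ ‖star (β w) k - lam₀ k‖ < R := by
      intro k
      have hlt0 : 2 * k.1 < 2 * d := by have := k.isLt; omega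
      have hlt1 : 2 * k.1 + 1 < 2 * d := by have := k.isLt; omega
      have h0 := hw' ⟨2 * k.1, hlt0⟩
      have h1 := hw' ⟨2 * k.1 + 1, hlt1⟩
      rw [iotaEmb_apply_even d lam₀ k hlt0] at h0
      rw [iotaEmb_apply_odd d lam₀ k hlt1] at h1
      constructor
      · have := abs_lt_of_parts h0 h1
        have hR2 : 2 * (R / 4) < R := by linarith
        simp only [hα]
        exact lt_trans this hR2
      · have hs : star (β w) k = (starRingEnd ℂ) (w ⟨2 * k.1, hlt0⟩)
            + Complex.I * (starRingEnd ℂ) (w ⟨2 * k.1 + 1, hlt1⟩) := by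
          have : star (β w) k = (starRingEnd ℂ) (β w k) := rfl
          rw [this]
          simp only [hβ, map_sub, map_mul, Complex.conj_I]
          ring
        have h0' : ‖(starRingEnd ℂ) (w ⟨2 * k.1, hlt0⟩) - ((lam₀ k).re : ℂ)‖
            < R / 4 := by
          have he : (starRingEnd ℂ) (w ⟨2 * k.1, hlt0⟩) - ((lam₀ k).re : ℂ)
              = (starRingEnd ℂ) (w ⟨2 * k.1, hlt0⟩ - ((lam₀ k).re : ℂ)) := by
            rw [map_sub, Complex.conj_ofReal]
          rw [he, Complex.norm_conj]; exact h0
        have h1' : ‖(starRingEnd ℂ) (w ⟨2 * k.1 + 1, hlt1⟩) - ((lam₀ k).im : ℂ)‖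
            < R / 4 := by
          have he : (starRingEnd ℂ) (w ⟨2 * k.1 + 1, hlt1⟩) - ((lam₀ k).im : ℂ)
              = (starRingEnd ℂ) (w ⟨2 * k.1 + 1, hlt1⟩ - ((lam₀ k).im : ℂ)) := by
            rw [map_sub, Complex.conj_ofReal]
          rw [he, Complex.norm_conj]; exact h1
        have := abs_lt_of_parts h0' h1'
        have hR2 : 2 * (R / 4) < R := by linarith
        rw [hs]
        exact lt_trans this hR2
    constructor
    · rw [Metric.mem_ball, dist_pi_lt_iff hR]
      intro k; rw [Complex.dist_eq]; exact (hcoord k).1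
    · rw [Metric.mem_ball, dist_pi_lt_iff hR]
      intro k; rw [Complex.dist_eq]; exact (hcoord k).2
  -- differentiability of coordinate evaluations
  have hev : ∀ j : Fin (2 * d), Differentiable ℂ (fun w : Fin (2 * d) → ℂ => w j) :=
    fun j => (ContinuousLinearMap.proj (R := ℂ) (φ := fun _ : Fin (2 * d) => ℂ) j).differentiable
  have hαd : Differentiable ℂ α := by
    rw [hα]
    apply differentiable_pi.2
    intro k
    exact ((hev _)).add ((differentiable_const _).mul (hev _))
  have hβd : Differentiable ℂ β := by
    rw [hβ]
    apply differentiable_pi.2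
    intro k
    exact ((hev _)).sub ((differentiable_const _).mul (hev _))
  refine ⟨fun w => (φ (α w) + (starRingEnd ℂ) (φ (star (β w)))) / 2, ?_, ?_, ?_⟩
  · intro w hw
    have h1 : DifferentiableAt ℂ (fun w => φ (α w)) w :=
      (hφ.differentiableAt (Metric.isOpen_ball.mem_nhds (key w hw).1)).comp w (hαd w)
    have h2 : DifferentiableAt ℂ (fun ζ : Fin d → ℂ => (starRingEnd ℂ) (φ (star ζ))) (β w) :=
      conj_comp_star_differentiableAt
        (hφ.differentiableAt (Metric.isOpen_ball.mem_nhds (key w hw).2))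
    have h3 : DifferentiableAt ℂ (fun w => (starRingEnd ℂ) (φ (star (β w)))) w :=
      h2.comp w (hβd w)
    have h5 : DifferentiableAt ℂ
        (fun w => (φ (α w) + (starRingEnd ℂ) (φ (star (β w)))) / 2) w := by
      simp only [div_eq_mul_inv]
      exact (h1.add h3).mul_const _
    exact h5.differentiableWithinAt
  · intro w hw
    have b1 := hbd _ (key w hw).1
    have b2 := hbd _ (key w hw).2
    have h4 : (1 : ℝ) ≤ 4 ^ d := one_le_pow₀ (by norm_num)
    have hb : ‖(φ (α w) + (starRingEnd ℂ) (φ (star (β w)))) / 2‖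
        ≤ (M + M) / 2 := by
      rw [norm_div, Complex.norm_two]
      apply div_le_div_of_nonneg_right ?_ (by norm_num)
      calc ‖_‖ ≤ ‖φ (α w)‖
            + ‖(starRingEnd ℂ) (φ (star (β w)))‖ := norm_add_le _ _
        _ ≤ M + M := by rw [Complex.norm_conj]; exact add_le_add b1 b2
    calc ‖_‖ ≤ (M + M) / 2 := hb
      _ = M := by ring
      _ ≤ 4 ^ d * M := by nlinarith
  · intro z hz
    have hz1 : α (iotaEmb d z) = z := by
      funext k
      have hlt0 : 2 * k.1 < 2 * d := by have := k.isLt; omega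
      have hlt1 : 2 * k.1 + 1 < 2 * d := by have := k.isLt; omega
      simp only [hα]
      rw [iotaEmb_apply_even d z k hlt0, iotaEmb_apply_odd d z k hlt1, mul_comm,
        Complex.re_add_im]
    have hz2 : star (β (iotaEmb d z)) = z := by
      funext k
      have hlt0 : 2 * k.1 < 2 * d := by have := k.isLt; omega
      have hlt1 : 2 * k.1 + 1 < 2 * d := by have := k.isLt; omega
      have hr : star (β (iotaEmb d z)) k = (starRingEnd ℂ) (β (iotaEmb d z) k) := rfl
      rw [hr]
      simp only [hβ]
      rw [iotaEmb_apply_even d z k hlt0, iotaEmb_apply_odd d z k hlt1]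
      simp only [map_sub, map_mul, Complex.conj_I, Complex.conj_ofReal]
      rw [neg_mul, sub_neg_eq_add, mul_comm, Complex.re_add_im]
    show (φ (α (iotaEmb d z)) + (starRingEnd ℂ) (φ (star (β (iotaEmb d z))))) / 2 = ((φ z).re : ℂ)
    rw [hz1, hz2, Complex.add_conj]
    push_cast
    ring
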